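/- Let B be a positive definite n×n complex matrix and x ∈ ℂⁿ a unit vector. Then for every t ∈ [0,1], with r = min{t, 1−t}, one has ⟨B^t x, x⟩ ≤ (⟨B^{1/2}x, x⟩ / ⟨Bx, x⟩^{1/2})^{2r} · ⟨Bx, x⟩^{t}. -/

import Mathlib

/-!
Diagonalise `B = U diag(λ) U*`. Then `⟨Bˢx, x⟩ = ∑ λᵢˢ wᵢ` with weights `wᵢ = |(U*x)ᵢ|²` summing
to `‖x‖² = 1`, and by Hölder's inequality `s ↦ ∑ λᵢˢ wᵢ` is log-convex. Writing `t` as a convex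
combination of `0` and `1/2` (if `t ≤ 1/2`) or of `1/2` and `1` (if `t ≥ 1/2`) gives the bound.
-/

open Matrix ComplexOrder

/-- Real power of a (Hermitian) matrix via the continuous functional calculus. -/
noncomputable def mrpow {n : ℕ} (A : Matrix (Fin n) (Fin n) ℂ) (t : ℝ) :
    Matrix (Fin n) (Fin n) ℂ :=
  cfc (fun x : ℝ => x ^ t) A

section PowerMoment

variable {ι : Type*} [Fintype ι]

noncomputable def powerMoment (l p : ι → ℝ) (s : ℝ) : ℝ := ∑ i, l i ^ s * p i

lemma powerMoment_zero (l p : ι → ℝ) : powerMoment l p 0 = ∑ i, p i := by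
  simp [powerMoment]

lemma powerMoment_nonneg {l p : ι → ℝ} (hl : ∀ i, 0 ≤ l i) (hp : ∀ i, 0 ≤ p i) (s : ℝ) :
    0 ≤ powerMoment l p s :=
  Finset.sum_nonneg fun i _ => mul_nonneg (Real.rpow_nonneg (hl i) s) (hp i)

open Real in
/-- Hölder's inequality with exponents `1 / θ` and `1 / (1 - θ)`, applied to the factorisation
`l ^ (θ a + (1 - θ) b) p = (l ^ a p) ^ θ (l ^ b p) ^ (1 - θ)`. -/
lemma powerMoment_convexComb_le {l p : ι → ℝ} (hl : ∀ i, 0 < l i) (hp : ∀ i, 0 ≤ p i)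
    (a b : ℝ) {θ : ℝ} (hθ₀ : 0 ≤ θ) (hθ₁ : θ ≤ 1) :
    powerMoment l p (θ * a + (1 - θ) * b) ≤
      powerMoment l p a ^ θ * powerMoment l p b ^ (1 - θ) := by
  rcases hθ₀.eq_or_lt with rfl | hθ₀
  · simp
  rcases hθ₁.eq_or_lt with rfl | hθ₁
  · simp
  have hθ₁' : 0 < 1 - θ := sub_pos.2 hθ₁
  have hf (s : ℝ) (i : ι) : 0 ≤ l i ^ s * p i := mul_nonneg (rpow_nonneg (hl i).le s) (hp i)
  have hsplit (i : ι) : l i ^ (θ * a + (1 - θ) * b) * p i =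
      (l i ^ a * p i) ^ θ * (l i ^ b * p i) ^ (1 - θ) := by
    rw [mul_rpow (rpow_nonneg (hl i).le a) (hp i), mul_rpow (rpow_nonneg (hl i).le b) (hp i),
      ← rpow_mul (hl i).le, ← rpow_mul (hl i).le, mul_mul_mul_comm, ← rpow_add (hl i),
      ← rpow_add_of_nonneg (hp i) hθ₀.le hθ₁'.le, add_sub_cancel, rpow_one]
    ring_nf
  have hroot {s c : ℝ} (hc : 0 < c) (i : ι) :
      ((l i ^ s * p i) ^ c) ^ (1 / c) = l i ^ s * p i := by
    rw [← rpow_mul (hf s i), mul_one_div_cancel hc.ne', rpow_one]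
  calc powerMoment l p (θ * a + (1 - θ) * b)
      = ∑ i, (l i ^ a * p i) ^ θ * (l i ^ b * p i) ^ (1 - θ) := by
        simp only [powerMoment, hsplit]
    _ ≤ (∑ i, ((l i ^ a * p i) ^ θ) ^ (1 / θ)) ^ (1 / (1 / θ)) *
        (∑ i, ((l i ^ b * p i) ^ (1 - θ)) ^ (1 / (1 - θ))) ^ (1 / (1 / (1 - θ))) :=
        inner_le_Lp_mul_Lq_of_nonneg _ (holderConjugate_one_div hθ₀ hθ₁' (by ring))
          (fun i _ => rpow_nonneg (hf a i) θ) (fun i _ => rpow_nonneg (hf b i) (1 - θ))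
    _ = powerMoment l p a ^ θ * powerMoment l p b ^ (1 - θ) := by
        simp only [hroot hθ₀, hroot hθ₁', one_div_one_div, powerMoment]

end PowerMoment

lemma Real.div_rpow_half_rpow_two_mul_mul_rpow {A C : ℝ} (hA : 0 ≤ A) (hC : 0 < C) (r t : ℝ) :
    (A / C ^ (1 / 2 : ℝ)) ^ (2 * r) * C ^ t = A ^ (2 * r) * C ^ (t - r) := by
  rw [div_rpow hA (rpow_nonneg hC.le _), ← rpow_mul hC.le, show (1 / 2 : ℝ) * (2 * r) = r by ring,
    div_mul_eq_mul_div, mul_div_assoc, ← rpow_sub hC]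

namespace Matrix.IsHermitian

section SpectralWeight

variable {ι : Type*} [Fintype ι] [DecidableEq ι] {B : Matrix ι ι ℂ}

noncomputable def spectralWeight (hB : B.IsHermitian) (x : ι → ℂ) (i : ι) : ℝ :=
  Complex.normSq ((star (hB.eigenvectorUnitary : Matrix ι ι ℂ) *ᵥ x) i)

lemma spectralWeight_nonneg (hB : B.IsHermitian) (x : ι → ℂ) (i : ι) :
    0 ≤ hB.spectralWeight x i :=
  Complex.normSq_nonneg _

lemma re_dotProduct_cfc_mulVec (hB : B.IsHermitian) (x : ι → ℂ) (f : ℝ → ℝ) :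
    (star x ⬝ᵥ (cfc f B *ᵥ x)).re = ∑ i, f (hB.eigenvalues i) * hB.spectralWeight x i := by
  rw [hB.cfc_eq, IsHermitian.cfc, Unitary.conjStarAlgAut_apply]
  set U := (hB.eigenvectorUnitary : Matrix ι ι ℂ)
  set y := star U *ᵥ x with hy
  have hstar : star x ᵥ* U = star y := by
    rw [hy, star_mulVec, star_eq_conjTranspose, conjTranspose_conjTranspose]
  rw [← mulVec_mulVec, ← mulVec_mulVec, dotProduct_mulVec, hstar, ← hy, dotProduct,
    Complex.re_sum]
  refine Finset.sum_congr rfl fun i _ => ?_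
  simp only [Pi.star_apply, RCLike.star_def, Complex.coe_algebraMap, mulVec_diagonal,
    Function.comp_apply, Complex.mul_re, Complex.conj_re, Complex.ofReal_re, Complex.ofReal_im,
    zero_mul, sub_zero, Complex.conj_im, Complex.mul_im, add_zero, neg_mul, sub_neg_eq_add,
    spectralWeight, Complex.normSq_apply]
  ring

lemma sum_spectralWeight (hB : B.IsHermitian) (x : ι → ℂ) :
    ∑ i, hB.spectralWeight x i = (star x ⬝ᵥ x).re := by
  simpa [cfc_const_one ℝ B] using (hB.re_dotProduct_cfc_mulVec x fun _ => 1).symm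

end SpectralWeight

variable {n : ℕ} {B : Matrix (Fin n) (Fin n) ℂ}

lemma re_dotProduct_mrpow_mulVec (hB : B.IsHermitian) (x : Fin n → ℂ) (s : ℝ) :
    (star x ⬝ᵥ (mrpow B s *ᵥ x)).re = powerMoment hB.eigenvalues (hB.spectralWeight x) s :=
  hB.re_dotProduct_cfc_mulVec x _

lemma mrpow_one (hB : B.IsHermitian) : mrpow B 1 = B := by
  rw [mrpow, show (fun z : ℝ => z ^ (1 : ℝ)) = id from funext Real.rpow_one]
  exact cfc_id ℝ B hB

end Matrix.IsHermitian

theorem stmt4 (n : ℕ) (B : Matrix (Fin n) (Fin n) ℂ) (hB : B.PosDef)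
    (x : Fin n → ℂ) (hx : star x ⬝ᵥ x = 1)
    (t : ℝ) (ht : t ∈ Set.Icc (0 : ℝ) 1) (r : ℝ) (hr : r = min t (1 - t)) :
    (star x ⬝ᵥ (mrpow B t *ᵥ x)).re ≤
      ((star x ⬝ᵥ (mrpow B (1 / 2) *ᵥ x)).re / (star x ⬝ᵥ (B *ᵥ x)).re ^ (1 / 2 : ℝ)) ^ (2 * r) *
        (star x ⬝ᵥ (B *ᵥ x)).re ^ t := by
  obtain ⟨ht₀, ht₁⟩ := ht
  have hl : ∀ i, 0 < hB.1.eigenvalues i := hB.eigenvalues_pos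
  have hw := hB.1.spectralWeight_nonneg x
  have hμ₀ : powerMoment hB.1.eigenvalues (hB.1.spectralWeight x) 0 = 1 := by
    rw [powerMoment_zero, hB.1.sum_spectralWeight, hx, Complex.one_re]
  have hμ₁ : (star x ⬝ᵥ (B *ᵥ x)).re =
      powerMoment hB.1.eigenvalues (hB.1.spectralWeight x) 1 := by
    rw [← hB.1.re_dotProduct_mrpow_mulVec, hB.1.mrpow_one]
  have hx₀ : x ≠ 0 := by rintro rfl; simp at hx
  have hC : 0 < (star x ⬝ᵥ (B *ᵥ x)).re := hB.re_dotProduct_pos hx₀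
  rw [hB.1.re_dotProduct_mrpow_mulVec, hB.1.re_dotProduct_mrpow_mulVec,
    Real.div_rpow_half_rpow_two_mul_mul_rpow (powerMoment_nonneg (fun i => (hl i).le) hw _) hC,
    hμ₁]
  rcases le_total t (1 / 2) with h | h
  · rw [hr, min_eq_left (by linarith)]
    convert powerMoment_convexComb_le hl hw (1 / 2) 0 (θ := 2 * t) (by linarith) (by linarith)
      using 2
    · ring
    · rw [sub_self, hμ₀, Real.rpow_zero, Real.one_rpow]
  · rw [hr, min_eq_right (by linarith)]
    convert powerMoment_convexComb_le hl hw (1 / 2) 1 (θ := 2 * (1 - t)) (by linarith)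
      (by linarith) using 2 <;> ring_nf
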